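/- Let S ⊆ lim(ω₁) be stationary and suppose every ladder system on S satisfies 2-uniformization (respectively ℵ₀-uniformization). If E ⊆ {δ + n : δ ∈ S, n ∈ ω} and every ladder system considered on E has the property that ladders at δ + n and δ + m have disjoint ranges for n ≠ m, then every such ladder system on E satisfies 2-uniformization (respectively ℵ₀-uniformization). -/

import Mathlib

open Ordinal Set

noncomputable def omega1 : Ordinal := (Cardinal.aleph 1).ord

def IsLadderOn (δ : Ordinal) (η : ℕ → Ordinal) : Prop :=
  StrictMono η ∧ (∀ n, η n < δ) ∧ ∀ β < δ, ∃ n, β ≤ η n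

def IsLadderAt (α : Ordinal) (η : ℕ → Ordinal) : Prop :=
  ∃ (δ : Ordinal) (n : ℕ), (δ ≠ 0 ∧ ∀ a < δ, Order.succ a < δ) ∧ α = δ + n ∧ IsLadderOn δ η

def IsClubOrd (C : Set Ordinal) : Prop :=
  C ⊆ Set.Iio omega1 ∧
  (∀ α < omega1, ∃ β ∈ C, α < β) ∧
  (∀ δ < omega1, (δ ≠ 0 ∧ ∀ a < δ, Order.succ a < δ) → (∀ α < δ, ∃ β ∈ C, α < β ∧ β < δ) → δ ∈ C)

def IsStat (S : Set Ordinal) : Prop := ∀ C, IsClubOrd C → (S ∩ C).Nonempty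

def UnifBelow (S : Set Ordinal) (η : Ordinal → ℕ → Ordinal) (h : Ordinal → ℕ → ℕ) : Prop :=
  ∀ c : Ordinal → ℕ → ℕ, (∀ α ∈ S, ∀ n, c α n < h α n) →
    ∃ (f : Ordinal → ℕ) (fs : Ordinal → ℕ), ∀ α ∈ S, ∀ n, fs α ≤ n → f (η α n) = c α n

def LambdaUnif (S : Set Ordinal) (η : Ordinal → ℕ → Ordinal) (l : ℕ) : Prop :=
  UnifBelow S η (fun _ _ => l)

def OmegaUnif (S : Set Ordinal) (η : Ordinal → ℕ → Ordinal) : Prop :=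
  ∀ c : Ordinal → ℕ → ℕ,
    ∃ (f : Ordinal → ℕ) (fs : Ordinal → ℕ), ∀ α ∈ S, ∀ n, fs α ≤ n → f (η α n) = c α n

def TreeLike (S : Set Ordinal) (η : Ordinal → ℕ → Ordinal) : Prop :=
  ∀ α ∈ S, ∀ β ∈ S, ∀ n m, η α n = η β m → n = m ∧ ∀ k ≤ n, η α k = η β k

def StronglyTreeLike (S : Set Ordinal) (η : Ordinal → ℕ → Ordinal) (F : Ordinal → ℕ) : Prop :=
  TreeLike S η ∧ ∀ α ∈ S, ∀ β ∈ S, ∀ n m, η α n = η β m → F α = F β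

/-!
For each `δ ∈ S`, the ladders at the points `δ + n ∈ E`, with an initial segment of each cut
off, are merged into a single ladder `ζ δ` on `δ` containing a tail of every one of them. Since
these ladders have pairwise disjoint ranges, a coloring of the ladders on `E` induces a
well-defined coloring of the ladders `ζ δ`, and a function uniformizing the latter also
uniformizes the former.
-/

open Filter Order

theorem exists_strictMono_range_eq {α : Type*} [LinearOrder α] [WellFoundedLT α] {U : Set α}
    (hne : U.Nonempty) (hmax : ∀ a ∈ U, ∃ b ∈ U, a < b) (hfin : ∀ a ∈ U, (U ∩ Iic a).Finite) :
    ∃ e : ℕ → α, StrictMono e ∧ range e = U := by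
  have : Nonempty U := hne.to_subtype
  have : NoMaxOrder U := ⟨fun a => let ⟨b, hb, hab⟩ := hmax a a.2; ⟨⟨b, hb⟩, hab⟩⟩
  let : LocallyFiniteOrder U := .ofFiniteIcc fun a b =>
    Finite.of_finite_image ((hfin b b.2).subset (by rintro _ ⟨x, hx, rfl⟩; exact ⟨x.2, hx.2⟩))
      Subtype.val_injective.injOn
  let : SuccOrder U := LinearLocallyFiniteOrder.succOrder U
  let : PredOrder U := LinearLocallyFiniteOrder.predOrder U
  let : OrderBot U := WellFoundedLT.toOrderBot U
  let iso : ℕ ≃o U := orderIsoNatOfLinearSuccPredArch.symm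
  exact ⟨Subtype.val ∘ iso, Subtype.strictMono_coe _ |>.comp iso.strictMono, by
    rw [range_comp, iso.range_eq, image_univ, Subtype.range_coe]⟩

theorem exists_strictMono_tendsto_atTop (α : Type*) [LinearOrder α] [Countable α] [Nonempty α]
    [NoMaxOrder α] : ∃ u : ℕ → α, StrictMono u ∧ Tendsto u atTop atTop := by
  obtain ⟨x, hx⟩ := exists_seq_tendsto (atTop : Filter α)
  obtain ⟨φ, hφ, hxφ⟩ := strictMono_subseq_of_tendsto_atTop hx
  exact ⟨x ∘ φ, hxφ, hx.comp hφ.tendsto_atTop⟩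

theorem exists_bound_iff_eventually {ι : Type*} {S : Set ι} {P : ι → ℕ → Prop} :
    (∃ fs : ι → ℕ, ∀ α ∈ S, ∀ n, fs α ≤ n → P α n) ↔ ∀ α ∈ S, ∀ᶠ n in atTop, P α n := by
  simp only [eventually_atTop]
  constructor
  · rintro ⟨fs, h⟩ α hα
    exact ⟨fs α, h α hα⟩
  · intro h
    choose! fs hfs using h
    exact ⟨fs, hfs⟩

theorem isSuccLimit_of_ne_zero_of_succ_lt {δ : Ordinal} (h : δ ≠ 0 ∧ ∀ a < δ, succ a < δ) :
    IsSuccLimit δ :=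
  Ordinal.isSuccLimit_iff.2 ⟨h.1, isSuccPrelimit_iff_succ_lt.2 h.2⟩

theorem eq_of_add_natCast_eq_add_natCast {δ δ' : Ordinal} {n n' : ℕ} (hδ : IsSuccLimit δ)
    (hδ' : IsSuccLimit δ') (h : δ + n = δ' + n') : δ = δ' := by
  by_contra hne
  rcases lt_or_gt_of_ne hne with hlt | hlt
  · exact (hδ'.add_natCast_lt hlt n).not_ge (h ▸ le_self_add)
  · exact (hδ.add_natCast_lt hlt n').not_ge (h ▸ le_self_add)

theorem countable_Iio_of_lt_omega1 {δ : Ordinal} (hδ : δ < omega1) : (Iio δ).Countable := by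
  rw [omega1, Cardinal.lt_ord] at hδ
  rw [← Cardinal.le_aleph0_iff_set_countable, Cardinal.mk_Iio_ordinal, Cardinal.lift_le_aleph0]
  exact Cardinal.lt_aleph_one_iff.1 hδ

namespace IsLadderOn

variable {δ : Ordinal} {η : ℕ → Ordinal}

theorem exists_gt (h : IsLadderOn δ η) {β : Ordinal} (hβ : β < δ) : ∃ n, β < η n :=
  let ⟨n, hn⟩ := h.2.2 β hβ
  ⟨n + 1, hn.trans_lt (h.1 n.lt_succ_self)⟩

theorem eventually_gt (h : IsLadderOn δ η) {β : Ordinal} (hβ : β < δ) :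
    ∀ᶠ n in atTop, β < η n :=
  let ⟨n, hn⟩ := h.exists_gt hβ
  eventually_atTop.2 ⟨n, fun _ hm => hn.trans_le (h.1.monotone hm)⟩

theorem finite_setOf_le (h : IsLadderOn δ η) {β : Ordinal} (hβ : β < δ) :
    {n | η n ≤ β}.Finite := by
  have hgt : ∀ᶠ n in cofinite, β < η n := Nat.cofinite_eq_atTop ▸ h.eventually_gt hβ
  exact (eventually_cofinite.1 hgt).subset fun _ hn => not_lt.2 hn

end IsLadderOn

theorem IsLadderAt.isLadderOn {δ : Ordinal} {η : ℕ → Ordinal} {n : ℕ} (hδ : IsSuccLimit δ)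
    (h : IsLadderAt (δ + n) η) : IsLadderOn δ η := by
  obtain ⟨δ', n', hδ', heq, hη⟩ := h
  rwa [eq_of_add_natCast_eq_add_natCast hδ (isSuccLimit_of_ne_zero_of_succ_lt hδ') heq]

theorem exists_isLadderOn {δ : Ordinal} (hδ : δ < omega1) (hlim : IsSuccLimit δ) :
    ∃ η, IsLadderOn δ η := by
  have : Countable (Iio δ) := (countable_Iio_of_lt_omega1 hδ).to_subtype
  have : Nonempty (Iio δ) := ⟨⟨0, hlim.bot_lt⟩⟩
  have : NoMaxOrder (Iio δ) := ⟨fun a => ⟨⟨succ a, hlim.succ_lt a.2⟩, lt_succ (a : Ordinal)⟩⟩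
  obtain ⟨u, hu, htend⟩ := exists_strictMono_tendsto_atTop (Iio δ)
  exact ⟨fun n => u n, Subtype.strictMono_coe _ |>.comp hu, fun n => (u n).2,
    fun β hβ => (htend.eventually_ge_atTop ⟨β, hβ⟩).exists⟩

theorem exists_isLadderOn_eventually_mem_range {δ : Ordinal} {s : ℕ → ℕ → Ordinal}
    (hs : ∀ n, IsLadderOn δ (s n)) :
    ∃ ζ, IsLadderOn δ ζ ∧ ∀ n, ∀ᶠ m in atTop, s n m ∈ range ζ := by
  -- Cutting the `n`-th ladder below `s 0 n` leaves only finitely many points below each `γ < δ`.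
  set U := ⋃ n, s n '' {m | s 0 n < s n m}
  have hU : U ⊆ Iio δ := iUnion_subset fun n => by
    rintro _ ⟨m, -, rfl⟩
    exact (hs n).2.1 m
  have hcof : ∀ β < δ, ∃ x ∈ U, β < x := fun β hβ => by
    obtain ⟨m, hm⟩ := (hs 0).exists_gt (max_lt hβ ((hs 0).2.1 0))
    exact ⟨s 0 m, mem_iUnion.2 ⟨0, m, (le_max_right _ _).trans_lt hm, rfl⟩,
      (le_max_left _ _).trans_lt hm⟩
  have hfin : ∀ γ ∈ U, (U ∩ Iic γ).Finite := fun γ hγ => by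
    obtain ⟨N, hN⟩ := (hs 0).exists_gt (hU hγ)
    refine (Finite.biUnion (finite_Iio N) fun n _ =>
      ((hs n).finite_setOf_le (hU hγ)).image (s n)).subset ?_
    rintro _ ⟨hx, hle⟩
    obtain ⟨n, m, hm, rfl⟩ := mem_iUnion.1 hx
    refine mem_biUnion (x := n) (mem_Iio.2 <| not_le.1 fun hNn => ?_) ⟨m, hle, rfl⟩
    exact hle.not_gt (hN.trans_le ((hs 0).1.monotone hNn) |>.trans hm)
  obtain ⟨x, hx, -⟩ := hcof _ ((hs 0).2.1 0)
  obtain ⟨ζ, hζ, hrange⟩ := exists_strictMono_range_eq ⟨x, hx⟩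
    (fun a ha => (hcof a (hU ha)).imp fun _ => id) hfin
  refine ⟨ζ, ⟨hζ, fun k => hU (hrange ▸ mem_range_self k), fun β hβ => ?_⟩, fun n => ?_⟩
  · obtain ⟨_, hx, hβx⟩ := hcof β hβ
    obtain ⟨k, rfl⟩ := hrange ▸ hx
    exact ⟨k, hβx.le⟩
  · filter_upwards [(hs n).eventually_gt ((hs 0).2.1 n)] with m hm
    exact hrange ▸ mem_iUnion.2 ⟨n, m, hm, rfl⟩

theorem exists_isLadderOn_coloring_transfer {δ : Ordinal} {b : ℕ → Ordinal}
    {s : ℕ → ℕ → Ordinal} {N : Set ℕ} (hb : IsLadderOn δ b) (hs : ∀ n ∈ N, IsLadderOn δ (s n))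
    (hdisj : N.Pairwise fun n n' => Disjoint (range (s n)) (range (s n'))) :
    ∃ ζ, IsLadderOn δ ζ ∧ ∀ col : ℕ → ℕ → ℕ, ∃ col' : ℕ → ℕ,
      (∀ k, col' k = 0 ∨ ∃ n ∈ N, ∃ m, col' k = col n m) ∧
      ∀ g : Ordinal → ℕ, (∀ᶠ k in atTop, g (ζ k) = col' k) →
        ∀ n ∈ N, ∀ᶠ m in atTop, g (s n m) = col n m := by
  classical
  have hinj : ∀ p q : ℕ × ℕ, p.1 ∈ N → q.1 ∈ N → s p.1 p.2 = s q.1 q.2 → p = q := by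
    rintro ⟨n, m⟩ ⟨n', m'⟩ hn hn' heq
    obtain rfl : n = n' := by_contra fun hne =>
      disjoint_left.1 (hdisj hn hn' hne) ⟨m, rfl⟩ ⟨m', heq.symm⟩
    exact congrArg _ ((hs n hn).1.injective heq)
  obtain ⟨ζ, hζ, hmem⟩ := exists_isLadderOn_eventually_mem_range
    (δ := δ) (s := fun n => if n ∈ N then s n else b) fun n => by
      split_ifs with hn
      exacts [hs n hn, hb]
  refine ⟨ζ, hζ, fun col => ?_⟩
  -- A point of `ζ` lies on at most one ladder `s n` with `n ∈ N`; it inherits that ladder's color.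
  let col' k := if h : ∃ p : ℕ × ℕ, p.1 ∈ N ∧ s p.1 p.2 = ζ k then col h.choose.1 h.choose.2 else 0
  refine ⟨col', fun k => ?_, fun g hg n hn => ?_⟩
  · by_cases h : ∃ p : ℕ × ℕ, p.1 ∈ N ∧ s p.1 p.2 = ζ k
    · exact .inr ⟨_, h.choose_spec.1, _, dif_pos h⟩
    · exact .inl (dif_neg h)
  obtain ⟨K, hK⟩ := eventually_atTop.1 hg
  filter_upwards [hmem n, (hs n hn).eventually_gt (hζ.2.1 K)] with m hm hKm
  obtain ⟨k, hk⟩ : s n m ∈ range ζ := by simpa only [hn, if_true] using hm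
  have hp : ∃ p : ℕ × ℕ, p.1 ∈ N ∧ s p.1 p.2 = ζ k := ⟨(n, m), hn, hk.symm⟩
  have hchoose : hp.choose = (n, m) := hinj _ _ hp.choose_spec.1 hn (hp.choose_spec.2.trans hk)
  rw [← hk, hK k (hζ.1.le_iff_le.1 (hk ▸ hKm).le)]
  simp only [col', dif_pos hp, hchoose]

theorem exists_ladderSystem_coloring_transfer {S E : Set Ordinal}
    (hS : ∀ δ ∈ S, δ < omega1 ∧ IsSuccLimit δ) (hE : ∀ α ∈ E, ∃ δ ∈ S, ∃ n : ℕ, α = δ + n)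
    {η : Ordinal → ℕ → Ordinal} (hη : ∀ α ∈ E, IsLadderAt α (η α))
    (hdisj : ∀ δ ∈ S, ∀ n m : ℕ, (δ + n : Ordinal) ∈ E → (δ + m : Ordinal) ∈ E → n ≠ m →
      Disjoint (range (η (δ + n))) (range (η (δ + m)))) :
    ∃ ζ : Ordinal → ℕ → Ordinal, (∀ δ ∈ S, IsLadderOn δ (ζ δ)) ∧
      ∀ c : Ordinal → ℕ → ℕ, ∃ c' : Ordinal → ℕ → ℕ,
        (∀ δ ∈ S, ∀ k, c' δ k = 0 ∨ ∃ α ∈ E, ∃ m, c' δ k = c α m) ∧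
        ∀ f : Ordinal → ℕ, (∀ δ ∈ S, ∀ᶠ k in atTop, f (ζ δ k) = c' δ k) →
          ∀ α ∈ E, ∀ᶠ m in atTop, f (η α m) = c α m := by
  choose! b hb using fun δ hδ => exists_isLadderOn (hS δ hδ).1 (hS δ hδ).2
  have hmerge := fun δ (hδ : δ ∈ S) => exists_isLadderOn_coloring_transfer
    (N := {n : ℕ | δ + n ∈ E}) (hb δ hδ) (fun n hn => (hη _ hn).isLadderOn (hS δ hδ).2)
    (fun n hn n' hn' => hdisj δ hδ n n' hn hn')
  choose! ζ hζ hcol using hmerge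
  choose! c' hc'0 hc' using hcol
  refine ⟨ζ, hζ, fun c => ⟨fun δ => c' δ fun n => c (δ + n), fun δ hδ k => ?_, fun f hf α hα => ?_⟩⟩
  · rcases hc'0 δ hδ (fun n => c (δ + n)) k with h | ⟨n, hn, m, h⟩
    exacts [.inl h, .inr ⟨_, hn, m, h⟩]
  · obtain ⟨δ, hδ, n, rfl⟩ := hE α hα
    exact hc' δ hδ _ f (hf δ hδ) n hα

theorem stmt10_general (S : Set Ordinal) (hS : ∀ δ ∈ S, δ < omega1 ∧ (δ ≠ 0 ∧ ∀ a < δ, Order.succ a < δ))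
    (E : Set Ordinal) (hE : ∀ α ∈ E, ∃ δ ∈ S, ∃ n : ℕ, α = δ + n) :
    ((∀ ζ : Ordinal → ℕ → Ordinal, (∀ δ ∈ S, IsLadderOn δ (ζ δ)) → LambdaUnif S ζ 2) →
      ∀ η : Ordinal → ℕ → Ordinal, (∀ α ∈ E, IsLadderAt α (η α)) →
        (∀ δ ∈ S, ∀ n m : ℕ, (δ + n : Ordinal) ∈ E → (δ + m : Ordinal) ∈ E → n ≠ m →
          Disjoint (Set.range (η (δ + n))) (Set.range (η (δ + m)))) →
        LambdaUnif E η 2) ∧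
    ((∀ ζ : Ordinal → ℕ → Ordinal, (∀ δ ∈ S, IsLadderOn δ (ζ δ)) → OmegaUnif S ζ) →
      ∀ η : Ordinal → ℕ → Ordinal, (∀ α ∈ E, IsLadderAt α (η α)) →
        (∀ δ ∈ S, ∀ n m : ℕ, (δ + n : Ordinal) ∈ E → (δ + m : Ordinal) ∈ E → n ≠ m →
          Disjoint (Set.range (η (δ + n))) (Set.range (η (δ + m)))) →
        OmegaUnif E η) := by
  have hS' δ (hδ : δ ∈ S) := And.imp_right isSuccLimit_of_ne_zero_of_succ_lt (hS δ hδ)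
  refine ⟨fun hunif η hη hdisj c hc => ?_, fun hunif η hη hdisj c => ?_⟩
  · obtain ⟨ζ, hζ, htransfer⟩ := exists_ladderSystem_coloring_transfer hS' hE hη hdisj
    obtain ⟨c', hc'val, hc'⟩ := htransfer c
    have hc'2 : ∀ δ ∈ S, ∀ k, c' δ k < 2 := fun δ hδ k => by
      rcases hc'val δ hδ k with h | ⟨α, hα, m, h⟩
      exacts [h ▸ two_pos, h ▸ hc α hα m]
    obtain ⟨f, hf⟩ := hunif ζ hζ c' hc'2
    exact ⟨f, exists_bound_iff_eventually.2 (hc' f (exists_bound_iff_eventually.1 hf))⟩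
  · obtain ⟨ζ, hζ, htransfer⟩ := exists_ladderSystem_coloring_transfer hS' hE hη hdisj
    obtain ⟨c', -, hc'⟩ := htransfer c
    obtain ⟨f, hf⟩ := hunif ζ hζ c'
    exact ⟨f, exists_bound_iff_eventually.2 (hc' f (exists_bound_iff_eventually.1 hf))⟩

/-- Let `S ⊆ lim(ω₁)` be stationary and `E ⊆ {δ + n : δ ∈ S, n ∈ ω}`.  If every ladder
system on `S` satisfies 2-uniformization (resp. `ℵ₀`-uniformization), then every ladder
system on `E` whose ladders at `δ + n` and `δ + m` (`n ≠ m`) have disjoint ranges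
satisfies 2-uniformization (resp. `ℵ₀`-uniformization). -/
theorem stmt10 (S : Set Ordinal) (hS : ∀ δ ∈ S, δ < omega1 ∧ (δ ≠ 0 ∧ ∀ a < δ, Order.succ a < δ))
    (hstat : IsStat S)
    (E : Set Ordinal) (hE : ∀ α ∈ E, ∃ δ ∈ S, ∃ n : ℕ, α = δ + n) :
    ((∀ ζ : Ordinal → ℕ → Ordinal, (∀ δ ∈ S, IsLadderOn δ (ζ δ)) → LambdaUnif S ζ 2) →
      ∀ η : Ordinal → ℕ → Ordinal, (∀ α ∈ E, IsLadderAt α (η α)) →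
        (∀ δ ∈ S, ∀ n m : ℕ, (δ + n : Ordinal) ∈ E → (δ + m : Ordinal) ∈ E → n ≠ m →
          Disjoint (Set.range (η (δ + n))) (Set.range (η (δ + m)))) →
        LambdaUnif E η 2) ∧
    ((∀ ζ : Ordinal → ℕ → Ordinal, (∀ δ ∈ S, IsLadderOn δ (ζ δ)) → OmegaUnif S ζ) →
      ∀ η : Ordinal → ℕ → Ordinal, (∀ α ∈ E, IsLadderAt α (η α)) →
        (∀ δ ∈ S, ∀ n m : ℕ, (δ + n : Ordinal) ∈ E → (δ + m : Ordinal) ∈ E → n ≠ m →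
          Disjoint (Set.range (η (δ + n))) (Set.range (η (δ + m)))) →
        OmegaUnif E η) :=
  stmt10_general S hS E hE
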